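/- arXiv:1609.09643 — 3 statements merged into one kernel-verified Lean document; each statement's English description precedes it below -/
import Mathlib

section
/- Let G = (V,E) be a finite connected multigraph and (T,γ) a rooted carving decomposition of G of width at most w (so for each node u of T, the number of edges of G with exactly one endpoint in V(u) = γ(leaves(T[u])) is at most w). Let r and s be nodes of T with s a descendant of r, and let W = V(r) \ V(s). Then the subgraph of G induced by W has at most 2w connected components. -/
/-- A rooted binary tree with leaves labeled by elements of `V`
(used as a carving decomposition of a multigraph with vertex set `V`). -/
inductive CTree (V : Type) : Type
  | leaf : V → CTree V
  | node : CTree V → CTree V → CTree V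

/-- The list of leaf labels of a labeled binary tree. -/
def CTree.verts {V : Type} : CTree V → List V
  | .leaf v => [v]
  | .node l r => l.verts ++ r.verts

/-- The subtree at a position given by a path of left/right (`false`/`true`) moves. -/
def CTree.subtreeAt {V : Type} : CTree V → List Bool → Option (CTree V)
  | t, [] => some t
  | .leaf _, _ :: _ => none
  | .node l r, b :: p => (if b then r else l).subtreeAt p

/-!
Every component `C` of the subgraph induced by `W = V(r) \ V(s)` is left by some edge: the graph
is connected and `V(s)` is a nonempty set of vertices outside `W`. Such an edge has exactly one
endpoint in `W`, so it determines `C`, and its other endpoint lies outside `V(r)` or inside `V(s)`.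
Hence the components inject into `δ(V(r)) ∪ δ(V(s))`, which has at most `2w` edges.
-/

namespace CTree

variable {V : Type}

theorem verts_ne_nil (t : CTree V) : t.verts ≠ [] := by
  induction t with
  | leaf v => simp [verts]
  | node l r ihl _ => simp [verts, ihl]

theorem subtreeAt_append (p q : List Bool) (t : CTree V) :
    t.subtreeAt (p ++ q) = (t.subtreeAt p).bind (·.subtreeAt q) := by
  induction p generalizing t with
  | nil => simp [subtreeAt]
  | cons b p ih =>
    cases t with
    | leaf v => simp [subtreeAt]
    | node l r => cases b <;> simp [subtreeAt, ih]

theorem verts_subset_of_subtreeAt {p : List Bool} {t t' : CTree V}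
    (h : t.subtreeAt p = some t') : t'.verts ⊆ t.verts := by
  induction p generalizing t with
  | nil => cases h; exact List.Subset.refl _
  | cons b p ih =>
    cases t with
    | leaf v => simp [subtreeAt] at h
    | node l r =>
      cases b
      · exact fun _ hv => List.mem_append_left _ (ih h hv)
      · exact fun _ hv => List.mem_append_right _ (ih h hv)

end CTree

section EdgeBoundary

variable {V E : Type*} (ε : E → V × V)

def edgeBoundary (S : Set V) : Set E :=
  {e | ((ε e).1 ∈ S ∧ (ε e).2 ∉ S) ∨ ((ε e).2 ∈ S ∧ (ε e).1 ∉ S)}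

variable {ε}

theorem edgeBoundary_diff_subset {S T : Set V} (hTS : T ⊆ S) :
    edgeBoundary ε (S \ T) ⊆ edgeBoundary ε S ∪ edgeBoundary ε T := by
  intro e he
  simp only [edgeBoundary, Set.mem_ofPred_eq, Set.mem_union, Set.mem_sdiff] at he ⊢
  have := @hTS (ε e).1
  have := @hTS (ε e).2
  tauto

theorem eq_of_mem_edgeBoundary {S : Set V} {e : E} (he : e ∈ edgeBoundary ε S) {x y : V}
    (hx : x ∈ S) (hy : y ∈ S) (hxe : x = (ε e).1 ∨ x = (ε e).2)
    (hye : y = (ε e).1 ∨ y = (ε e).2) : x = y := by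
  simp only [edgeBoundary, Set.mem_ofPred_eq] at he
  rcases hxe with rfl | rfl <;> rcases hye with rfl | rfl <;> tauto

theorem ncard_edgeBoundary_eq_card_filter [Fintype E] (S : Set V) [DecidablePred (· ∈ S)] :
    (edgeBoundary ε S).ncard = (Finset.univ.filter fun e : E =>
      ((ε e).1 ∈ S ∧ (ε e).2 ∉ S) ∨ ((ε e).2 ∈ S ∧ (ε e).1 ∉ S)).card := by
  rw [← Set.ncard_coe_finset, Finset.coe_filter_univ]
  rfl

end EdgeBoundary

section InducedComponents

abbrev inducedGraph {V E : Type*} (ε : E → V × V) (W : Set V) : SimpleGraph W :=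
  SimpleGraph.fromRel fun x y => ∃ e, ε e = (x.1, y.1)

variable {V E : Type*} {ε : E → V × V} {W : Set V}

theorem inducedGraph_reachable_of_edge {x y : W}
    (hxy : ∃ e, ε e = (x.1, y.1) ∨ ε e = (y.1, x.1)) :
    (inducedGraph ε W).Reachable x y := by
  by_cases h : x = y
  · exact h ▸ .refl x
  obtain ⟨e, he | he⟩ := hxy
  · exact SimpleGraph.Adj.reachable ⟨h, .inl ⟨e, he⟩⟩
  · exact SimpleGraph.Adj.reachable ⟨h, .inr ⟨e, he⟩⟩

theorem exists_edgeBoundary_of_reflTransGen {x v : V}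
    (hxv : Relation.ReflTransGen (fun a b => ∃ e, ε e = (a, b) ∨ ε e = (b, a)) x v)
    (hv : v ∉ W) (hx : x ∈ W) :
    ∃ e ∈ edgeBoundary ε W, ∃ y : W, (y.1 = (ε e).1 ∨ y.1 = (ε e).2) ∧
      (inducedGraph ε W).Reachable ⟨x, hx⟩ y := by
  induction hxv using Relation.ReflTransGen.head_induction_on with
  | refl => exact absurd hx hv
  | @head x z hxz _ ih =>
    by_cases hz : z ∈ W
    · obtain ⟨e, he, y, hye, hzy⟩ := ih hz
      exact ⟨e, he, y, hye, (inducedGraph_reachable_of_edge hxz).trans hzy⟩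
    · obtain ⟨e, he | he⟩ := hxz
      · exact ⟨e, by simp [edgeBoundary, he, hx, hz], ⟨x, hx⟩, by simp [he], .refl _⟩
      · exact ⟨e, by simp [edgeBoundary, he, hx, hz], ⟨x, hx⟩, by simp [he], .refl _⟩

theorem card_connectedComponent_le_ncard_edgeBoundary [Finite E]
    (hconn : ∀ v w : V,
      Relation.ReflTransGen (fun a b => ∃ e, ε e = (a, b) ∨ ε e = (b, a)) v w)
    {v : V} (hv : v ∉ W) :
    Nat.card (inducedGraph ε W).ConnectedComponent ≤ (edgeBoundary ε W).ncard := by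
  have hexit (c : (inducedGraph ε W).ConnectedComponent) : ∃ e : edgeBoundary ε W, ∃ y : W,
      (y.1 = (ε e).1 ∨ y.1 = (ε e).2) ∧ (inducedGraph ε W).connectedComponentMk y = c := by
    obtain ⟨x, rfl⟩ := c.exists_rep
    obtain ⟨e, he, y, hye, hxy⟩ := exists_edgeBoundary_of_reflTransGen (hconn x v) hv x.2
    exact ⟨⟨e, he⟩, y, hye, (SimpleGraph.ConnectedComponent.sound hxy).symm⟩
  choose f y hye hyc using hexit
  have hf : Function.Injective f := by
    intro c c' hcc
    have hyy : y c = y c' := Subtype.ext <|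
      eq_of_mem_edgeBoundary (f c').2 (y c).2 (y c').2 (hcc ▸ hye c) (hye c')
    rw [← hyc c, ← hyc c', hyy]
  rw [← Nat.card_coe_set_eq]
  exact Nat.card_le_card_of_injective f hf

end InducedComponents

theorem induced_components_le_general (V E : Type) [DecidableEq V] [Fintype E]
    (ε : E → V × V)
    (hconn : ∀ v w : V, Relation.ReflTransGen (fun a b => ∃ e, ε e = (a, b) ∨ ε e = (b, a)) v w)
    (T : CTree V)
    (w : ℕ)
    (hwidth : ∀ p t, T.subtreeAt p = some t →
      (Finset.univ.filter (fun e : E =>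
        ((ε e).1 ∈ t.verts ∧ (ε e).2 ∉ t.verts) ∨
        ((ε e).2 ∈ t.verts ∧ (ε e).1 ∉ t.verts))).card ≤ w)
    (pr ps : List Bool) (tr ts : CTree V)
    (hr : T.subtreeAt pr = some tr) (hs : T.subtreeAt ps = some ts)
    (hdesc : pr <+: ps) :
    Nat.card (SimpleGraph.fromRel
      (fun (x y : {v : V // v ∈ tr.verts ∧ v ∉ ts.verts}) =>
        ∃ e, ε e = (x.1, y.1))).ConnectedComponent ≤ 2 * w := by
  obtain ⟨q, rfl⟩ := hdesc
  have hts : ts.verts ⊆ tr.verts := by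
    rw [CTree.subtreeAt_append, hr] at hs
    exact CTree.verts_subset_of_subtreeAt hs
  have hcut {p t} (h : T.subtreeAt p = some t) :
      (edgeBoundary ε {v | v ∈ t.verts}).ncard ≤ w := by
    rw [ncard_edgeBoundary_eq_card_filter]
    exact hwidth p t h
  obtain ⟨v, hv⟩ := List.exists_mem_of_ne_nil _ ts.verts_ne_nil
  calc _ ≤ (edgeBoundary ε ({v | v ∈ tr.verts} \ {v | v ∈ ts.verts})).ncard :=
        card_connectedComponent_le_ncard_edgeBoundary hconn (v := v) fun h => h.2 hv
    _ ≤ (edgeBoundary ε {v | v ∈ tr.verts} ∪ edgeBoundary ε {v | v ∈ ts.verts}).ncard :=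
        Set.ncard_le_ncard (edgeBoundary_diff_subset fun _ h => hts h)
    _ ≤ w + w := (Set.ncard_union_le _ _).trans (add_le_add (hcut hr) (hcut hs))
    _ = 2 * w := (two_mul w).symm

/-- Let `G` be a finite connected loopless multigraph (edges `E` with endpoint map `ε`)
and `(T,γ)` a rooted carving decomposition of `G` of width at most `w`. If `s` is a
descendant of `r` in `T` and `W = V(r) \ V(s)`, then the subgraph of `G` induced by `W`
has at most `2w` connected components. -/
theorem induced_components_le (V E : Type) [Fintype V] [DecidableEq V] [Fintype E]
    (ε : E → V × V)
    (hloopless : ∀ e, (ε e).1 ≠ (ε e).2)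
    (hconn : ∀ v w : V, Relation.ReflTransGen (fun a b => ∃ e, ε e = (a, b) ∨ ε e = (b, a)) v w)
    (T : CTree V) (hnodup : T.verts.Nodup) (hsurj : ∀ v : V, v ∈ T.verts)
    (w : ℕ)
    (hwidth : ∀ p t, T.subtreeAt p = some t →
      (Finset.univ.filter (fun e : E =>
        ((ε e).1 ∈ t.verts ∧ (ε e).2 ∉ t.verts) ∨
        ((ε e).2 ∈ t.verts ∧ (ε e).1 ∉ t.verts))).card ≤ w)
    (pr ps : List Bool) (tr ts : CTree V)
    (hr : T.subtreeAt pr = some tr) (hs : T.subtreeAt ps = some ts)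
    (hdesc : pr <+: ps) :
    Nat.card (SimpleGraph.fromRel
      (fun (x y : {v : V // v ∈ tr.verts ∧ v ∉ ts.verts}) =>
        ∃ e, ε e = (x.1, y.1))).ConnectedComponent ≤ 2 * w :=
  induced_components_le_general V E ε hconn T w hwidth pr ps tr ts hr hs hdesc
end

section
/- For any finite multigraph G of maximum degree Δ, the carving width of G is at most max(Δ, 1) times a constant multiple of (treewidth(G) + 1); more precisely, carw(G) ≤ C · Δ · (tw(G) + 1) for some absolute constant C. -/
/-!
Root the tree decomposition at a node `r`. For a node `i`, build a carving tree of the vertices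
whose bags all lie below `i` as a caterpillar whose pieces are single leaves for those vertices
that lie in `β i` and, recursively, one carving tree per child of `i`. Since the bags containing a
vertex form a subtree, an edge leaving a union of such pieces has an endpoint in `β i`. So every cut
is covered by a single bag and has at most `(t + 1) Δ` edges: `C = 1` works.
-/

namespace CTree

variable {V : Type}

def ForallSubtrees (P : List V → Prop) (T : CTree V) : Prop :=
  ∀ p s, T.subtreeAt p = some s → P s.verts

variable {P : List V → Prop}

lemma forallSubtrees_leaf {v : V} (h : P [v]) : (leaf v).ForallSubtrees P := by
  rintro (_ | ⟨_, _⟩) s hs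
  · cases hs
    exact h
  · cases hs

lemma ForallSubtrees.node {a b : CTree V} (ha : a.ForallSubtrees P) (hb : b.ForallSubtrees P)
    (h : P (a.verts ++ b.verts)) : (node a b).ForallSubtrees P := by
  rintro (_ | ⟨_ | _, p⟩) s hs
  · cases hs
    exact h
  · exact ha p s hs
  · exact hb p s hs

lemma flatMap_verts_map_leaf (l : List V) : (l.map leaf).flatMap verts = l := by
  rw [List.flatMap_map]
  exact List.flatMap_singleton' l

lemma verts_foldl_node (t : CTree V) (l : List (CTree V)) :
    (l.foldl node t).verts = t.verts ++ l.flatMap verts := by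
  induction l generalizing t with
  | nil => simp
  | cons u l ih => simp [ih, verts]

lemma ForallSubtrees.foldl_node {t : CTree V} {l : List (CTree V)} (ht : t.ForallSubtrees P)
    (hl : ∀ u ∈ l, u.ForallSubtrees P) (hpre : ∀ l', l' <+: l → P (t.verts ++ l'.flatMap verts)) :
    (l.foldl CTree.node t).ForallSubtrees P := by
  induction l generalizing t with
  | nil => exact ht
  | cons u l ih =>
    refine ih (ht.node (hl u List.mem_cons_self) ?_)
      (fun w hw => hl w (List.mem_cons_of_mem _ hw)) fun l' hl' => ?_
    · simpa using hpre [u] ((List.prefix_cons_inj _).2 List.nil_prefix)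
    · simpa [verts] using hpre (u :: l') ((List.prefix_cons_inj _).2 hl')

/-- The caterpillar `node (⋯ (node (node u₀ u₁) u₂) ⋯) uₙ`, whose subtrees are those of the `uⱼ`
and one per nonempty prefix of `[u₀, …, uₙ]`. -/
lemma exists_forallSubtrees_verts_eq {l : List (CTree V)} (hl : l ≠ [])
    (hu : ∀ u ∈ l, u.ForallSubtrees P) (hpre : ∀ l', l' <+: l → l' ≠ [] → P (l'.flatMap verts)) :
    ∃ T : CTree V, T.verts = l.flatMap verts ∧ T.ForallSubtrees P := by
  obtain ⟨t, l, rfl⟩ := List.exists_cons_of_ne_nil hl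
  refine ⟨l.foldl node t, by simp [verts_foldl_node], ?_⟩
  refine ForallSubtrees.foldl_node (hu t List.mem_cons_self)
    (fun u hu' => hu u (List.mem_cons_of_mem _ hu')) fun l' hl' => ?_
  simpa using hpre (t :: l') ((List.prefix_cons_inj _).2 hl') (List.cons_ne_nil _ _)

end CTree

def BagSeparated {ι V : Type*} (β : ι → Finset V) (S : List V) : Prop :=
  ∃ k, ∀ x ∈ S, ∀ y ∉ S, (∃ j, x ∈ β j ∧ y ∈ β j) → x ∈ β k ∨ y ∈ β k

def IsBagCarving {ι : Type*} {V : Type} (β : ι → Finset V) (S : Set V) (T : CTree V) : Prop :=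
  T.verts.Nodup ∧ (∀ v, v ∈ T.verts ↔ v ∈ S) ∧ T.ForallSubtrees (BagSeparated β)

namespace SimpleGraph.IsTree

section RootedTree

variable {ι : Type*} {G : SimpleGraph ι} (hG : G.IsTree)

noncomputable def path (r k : ι) : G.Walk r k := (hG.existsUnique_path r k).choose

lemma path_isPath (r k : ι) : (hG.path r k).IsPath := (hG.existsUnique_path r k).choose_spec.1

variable {hG} in
lemma eq_path {r k : ι} {q : G.Walk r k} (hq : q.IsPath) : q = hG.path r k :=
  (hG.existsUnique_path r k).choose_spec.2 q hq

/-- `j` is an ancestor of `k` (or `k` itself) when `G` is rooted at `r`. -/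
def IsAncestor (r j k : ι) : Prop := j ∈ (hG.path r k).support

def IsChild (r i c : ι) : Prop := G.Adj i c ∧ c ∉ (hG.path r i).support

variable {r : ι}

lemma isAncestor_root (k : ι) : hG.IsAncestor r r k := Walk.start_mem_support _

lemma isAncestor_refl (k : ι) : hG.IsAncestor r k k := Walk.end_mem_support _

variable {hG}

lemma IsAncestor.takeUntil_path [DecidableEq ι] {j k : ι} (h : hG.IsAncestor r j k) :
    (hG.path r k).takeUntil j h = hG.path r j :=
  eq_path ((hG.path_isPath r k).takeUntil h)

lemma IsAncestor.trans {i j k : ι} (hij : hG.IsAncestor r i j) (hjk : hG.IsAncestor r j k) :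
    hG.IsAncestor r i k := by
  classical
  rw [IsAncestor, ← hjk.takeUntil_path] at hij
  exact Walk.support_takeUntil_subset_support _ hjk hij

lemma IsChild.path_eq {i c : ι} (hc : hG.IsChild r i c) :
    hG.path r c = (hG.path r i).concat hc.1 := by
  refine (eq_path ?_).symm
  rw [Walk.isPath_def, Walk.support_concat]
  exact (hG.path_isPath r i).support_nodup.append (List.nodup_singleton c)
    (by simpa using hc.2)

lemma IsChild.support_path {i c : ι} (hc : hG.IsChild r i c) :
    (hG.path r c).support = (hG.path r i).support ++ [c] := by
  rw [hc.path_eq, Walk.support_concat]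

lemma IsChild.isAncestor {i c : ι} (hc : hG.IsChild r i c) : hG.IsAncestor r i c := by
  simp [IsAncestor, hc.support_path]

lemma IsChild.not_isAncestor {i c : ι} (hc : hG.IsChild r i c) : ¬ hG.IsAncestor r c i := hc.2

lemma IsChild.support_path_of_isAncestor {i c k : ι} (hc : hG.IsChild r i c)
    (h : hG.IsAncestor r c k) : ∃ l, (hG.path r k).support = (hG.path r i).support ++ c :: l := by
  classical
  refine ⟨((hG.path r k).dropUntil c h).support.tail, ?_⟩
  conv_lhs => rw [← (hG.path r k).take_spec h]
  rw [Walk.support_append, h.takeUntil_path, hc.support_path, List.append_assoc,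
    List.singleton_append]

lemma IsChild.eq_of_isAncestor {i c c' k : ι} (hc : hG.IsChild r i c) (hc' : hG.IsChild r i c')
    (h : hG.IsAncestor r c k) (h' : hG.IsAncestor r c' k) : c = c' := by
  obtain ⟨l, hl⟩ := hc.support_path_of_isAncestor h
  obtain ⟨l', hl'⟩ := hc'.support_path_of_isAncestor h'
  rw [hl] at hl'
  exact (List.cons_eq_cons.1 (List.append_cancel_left hl')).1

lemma IsChild.ncard_descendants_lt [Finite ι] {i c : ι} (hc : hG.IsChild r i c) :
    {k | hG.IsAncestor r c k}.ncard < {k | hG.IsAncestor r i k}.ncard :=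
  Set.ncard_lt_ncard ⟨fun _ hk => hc.isAncestor.trans hk,
    fun h => hc.not_isAncestor (h (hG.isAncestor_refl i))⟩

lemma exists_isChild_of_isAncestor {i k : ι} (h : hG.IsAncestor r i k) (hne : k ≠ i) :
    ∃ c, hG.IsChild r i c ∧ hG.IsAncestor r c k := by
  obtain ⟨q, w, hqw⟩ := Walk.mem_support_iff_exists_append.mp h
  cases w with
  | nil => exact absurd rfl hne
  | @cons _ c _ hadj w =>
    have hpath := hqw ▸ hG.path_isPath r k
    have hq : q = hG.path r i := eq_path hpath.of_append_left
    have hsupp : (hG.path r k).support = q.support ++ w.support := by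
      rw [hqw, Walk.support_append, Walk.support_cons, List.tail_cons]
    have hdisj := List.disjoint_of_nodup_append (hsupp ▸ (hG.path_isPath r k).support_nodup)
    refine ⟨c, ⟨hadj, fun hc => hdisj (hq ▸ hc) w.start_mem_support⟩, ?_⟩
    rw [IsAncestor, hsupp]
    exact List.mem_append_right _ w.start_mem_support

lemma IsChild.eq_of_adj {i c a b : ι} (hc : hG.IsChild r i c) (hab : G.Adj a b)
    (ha : hG.IsAncestor r c a) (hb : ¬ hG.IsAncestor r c b) : b = i := by
  classical
  have hac : a = c := by
    have hbypass : ((hG.path r b).concat hab.symm).bypass = hG.path r a :=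
      eq_path (Walk.bypass_isPath _)
    have hcw := Walk.support_bypass_subset_support _ (by rw [hbypass]; exact ha)
    rw [Walk.support_concat, List.mem_append, List.mem_singleton] at hcw
    exact (hcw.resolve_left hb).symm
  subst hac
  have hpath : ((hG.path r b).concat hab.symm).IsPath := by
    rw [Walk.isPath_def, Walk.support_concat]
    exact (hG.path_isPath r b).support_nodup.append (List.nodup_singleton a)
      (by simpa [IsAncestor] using hb)
  have he : (hG.path r b).concat hab.symm = (hG.path r i).concat hc.1 :=
    hc.path_eq ▸ eq_path hpath
  exact (Walk.concat_inj he).1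

lemma IsChild.mem_of_connected {i c a b : ι} (hc : hG.IsChild r i c) {S : Set ι}
    (hS : (G.induce S).Connected) (ha : a ∈ S) (hb : b ∈ S)
    (hca : hG.IsAncestor r c a) (hcb : ¬ hG.IsAncestor r c b) : i ∈ S := by
  obtain ⟨w⟩ := hS ⟨a, ha⟩ ⟨b, hb⟩
  obtain ⟨d, -, hd₁, hd₂⟩ := w.exists_boundary_dart {x | hG.IsAncestor r c x} hca hcb
  rw [← hc.eq_of_adj d.adj hd₁ hd₂]
  exact d.snd.2

end RootedTree

section TreeDecomposition

variable {ι V : Type*} {G : SimpleGraph ι} (hG : G.IsTree) (r : ι) (β : ι → Finset V)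

/-- For `v` in some bag: the topmost bag containing `v` lies below `c`. -/
def confined (c : ι) : Set V := {v | ∀ k, v ∈ β k → hG.IsAncestor r c k}

variable {hG r β}

lemma IsChild.not_mem_bag_of_mem_confined {i c : ι} (hc : hG.IsChild r i c) {v : V}
    (hv : v ∈ hG.confined r β c) : v ∉ β i :=
  fun hvi => hc.not_isAncestor (hv i hvi)

lemma IsChild.confined_subset {i c : ι} (hc : hG.IsChild r i c) :
    hG.confined r β c ⊆ hG.confined r β i :=
  fun _ hv k hvk => hc.isAncestor.trans (hv k hvk)

lemma IsChild.eq_of_mem_confined {i c c' : ι} (hc : hG.IsChild r i c)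
    (hc' : hG.IsChild r i c') {v : V} (hv : ∃ k, v ∈ β k) (hvc : v ∈ hG.confined r β c)
    (hvc' : v ∈ hG.confined r β c') : c = c' :=
  let ⟨k, hk⟩ := hv
  hc.eq_of_isAncestor hc' (hvc k hk) (hvc' k hk)

lemma exists_isChild_mem_confined {i : ι} {v : V} (hv : ∃ k, v ∈ β k)
    (hconn : (G.induce {j | v ∈ β j}).Connected) (hvi : v ∈ hG.confined r β i)
    (hvβ : v ∉ β i) : ∃ c, hG.IsChild r i c ∧ v ∈ hG.confined r β c := by
  obtain ⟨k, hk⟩ := hv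
  have hki : k ≠ i := by rintro rfl; exact hvβ hk
  obtain ⟨c, hc, hck⟩ := exists_isChild_of_isAncestor (hvi k hk) hki
  refine ⟨c, hc, fun j hj => ?_⟩
  by_contra hcj
  exact hvβ (hc.mem_of_connected hconn hk hj hck hcj)

lemma mem_confined_iff {i : ι} {v : V} (hv : ∃ k, v ∈ β k)
    (hconn : (G.induce {j | v ∈ β j}).Connected) :
    v ∈ hG.confined r β i ↔
      (v ∈ β i ∧ v ∈ hG.confined r β i) ∨ ∃ c, hG.IsChild r i c ∧ v ∈ hG.confined r β c := by
  refine ⟨fun hvi => ?_, ?_⟩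
  · by_cases hvβ : v ∈ β i
    · exact Or.inl ⟨hvβ, hvi⟩
    · exact Or.inr (exists_isChild_mem_confined hv hconn hvi hvβ)
  · rintro (⟨-, hvi⟩ | ⟨c, hc, hvc⟩)
    · exact hvi
    · exact hc.confined_subset hvc

end TreeDecomposition

section Carving

variable {ι : Type*} {V : Type} {G : SimpleGraph ι} {hG : G.IsTree} {r : ι} {β : ι → Finset V}

variable (hG r β) in
/-- The pieces from which the carving tree at node `i` is assembled. -/
def IsPiece (i : ι) (u : CTree V) : Prop :=
  (∃ w ∈ β i, u = .leaf w) ∨ ∃ c, hG.IsChild r i c ∧ IsBagCarving β (hG.confined r β c) u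

lemma bagSeparated_flatMap_verts {i : ι} (hconn : ∀ v : V, (G.induce {j | v ∈ β j}).Connected)
    {Q : List (CTree V)} (hQ : ∀ u ∈ Q, hG.IsPiece r β i u) :
    BagSeparated β (Q.flatMap CTree.verts) := by
  refine ⟨i, fun x hx y hy ⟨j, hxj, hyj⟩ => ?_⟩
  obtain ⟨u, hu, hxu⟩ := List.mem_flatMap.1 hx
  rcases hQ u hu with ⟨w, hw, rfl⟩ | ⟨c, hc, hcu⟩
  · rw [show x = w by simpa [CTree.verts] using hxu]
    exact Or.inl hw
  · right
    have hxc := (hcu.2.1 x).1 hxu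
    obtain ⟨k, hyk, hck⟩ : ∃ k, y ∈ β k ∧ ¬ hG.IsAncestor r c k := by
      by_contra! h
      exact hy (List.mem_flatMap.2 ⟨u, hu, (hcu.2.1 y).2 h⟩)
    exact hc.mem_of_connected (hconn y) hyj hyk (hxc j hxj) hck

lemma IsPiece.forallSubtrees {i : ι} (hconn : ∀ v : V, (G.induce {j | v ∈ β j}).Connected)
    {u : CTree V} (hu : hG.IsPiece r β i u) : u.ForallSubtrees (BagSeparated β) := by
  rcases hu with ⟨w, hw, rfl⟩ | ⟨c, -, hcu⟩
  · have := bagSeparated_flatMap_verts (hG := hG) (r := r) (i := i) hconn (Q := [.leaf w])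
      fun u hu => List.mem_singleton.1 hu ▸ Or.inl ⟨w, hw, rfl⟩
    exact CTree.forallSubtrees_leaf (by simpa [CTree.verts] using this)
  · exact hcu.2.2

variable [Fintype ι]

lemma exists_bagCarving_of_children (hvert : ∀ v : V, ∃ k, v ∈ β k)
    (hconn : ∀ v : V, (G.induce {j | v ∈ β j}).Connected) {i : ι}
    (hne : (hG.confined r β i).Nonempty) (tree : ι → CTree V)
    (htree : ∀ c, hG.IsChild r i c → (hG.confined r β c).Nonempty →
      IsBagCarving β (hG.confined r β c) (tree c)) :
    ∃ T, IsBagCarving β (hG.confined r β i) T := by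
  classical
  set leaves := ((β i).filter (· ∈ hG.confined r β i)).toList
  set cs := (Finset.univ.filter fun c => hG.IsChild r i c ∧ (hG.confined r β c).Nonempty).toList
  have mem_cs : ∀ c, c ∈ cs ↔ hG.IsChild r i c ∧ (hG.confined r β c).Nonempty := by simp [cs]
  have htree' : ∀ c ∈ cs, IsBagCarving β (hG.confined r β c) (tree c) :=
    fun c hc => htree c ((mem_cs c).1 hc).1 ((mem_cs c).1 hc).2
  set pieces := leaves.map CTree.leaf ++ cs.map tree
  have hpiece : ∀ u ∈ pieces, hG.IsPiece r β i u := by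
    intro u hu
    rcases List.mem_append.1 hu with hu | hu
    · obtain ⟨w, hw, rfl⟩ := List.mem_map.1 hu
      exact Or.inl ⟨w, (Finset.mem_filter.1 (Finset.mem_toList.1 hw)).1, rfl⟩
    · obtain ⟨c, hc, rfl⟩ := List.mem_map.1 hu
      exact Or.inr ⟨c, ((mem_cs c).1 hc).1, htree' c hc⟩
  have hverts : ∀ v, v ∈ pieces.flatMap CTree.verts ↔ v ∈ hG.confined r β i := by
    intro v
    rw [mem_confined_iff (hvert v) (hconn v), List.flatMap_append, CTree.flatMap_verts_map_leaf,
      List.mem_append, List.flatMap_map, List.mem_flatMap]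
    refine or_congr (by simp [leaves]) ⟨fun ⟨c, hc, hvc⟩ => ?_, fun ⟨c, hc, hvc⟩ => ?_⟩
    · exact ⟨c, ((mem_cs c).1 hc).1, ((htree' c hc).2.1 v).1 hvc⟩
    · have hcs : c ∈ cs := (mem_cs c).2 ⟨hc, v, hvc⟩
      exact ⟨c, hcs, ((htree' c hcs).2.1 v).2 hvc⟩
  have hnodup : (pieces.flatMap CTree.verts).Nodup := by
    rw [List.flatMap_append, CTree.flatMap_verts_map_leaf, List.nodup_append, List.flatMap_map]
    refine ⟨Finset.nodup_toList _, List.nodup_flatMap.2 ⟨fun c hc => (htree' c hc).1, ?_⟩, ?_⟩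
    · refine (Finset.nodup_toList _).imp_of_mem fun hc hc' hne =>
        List.disjoint_left.2 fun v hv hv' => hne ?_
      exact ((mem_cs _).1 hc).1.eq_of_mem_confined ((mem_cs _).1 hc').1 (hvert v)
        (((htree' _ hc).2.1 v).1 hv) (((htree' _ hc').2.1 v).1 hv')
    · rintro v hv _ hw rfl
      obtain ⟨c, hc, hvc⟩ := List.mem_flatMap.1 hw
      exact ((mem_cs c).1 hc).1.not_mem_bag_of_mem_confined (((htree' c hc).2.1 v).1 hvc)
        (Finset.mem_filter.1 (Finset.mem_toList.1 hv)).1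
  have hpieces_ne : pieces ≠ [] := by
    obtain ⟨v, hv⟩ := hne
    rintro h
    simpa [h] using (hverts v).2 hv
  obtain ⟨T, hTverts, hTsep⟩ := CTree.exists_forallSubtrees_verts_eq hpieces_ne
    (fun u hu => (hpiece u hu).forallSubtrees hconn)
    fun Q hQ _ => bagSeparated_flatMap_verts hconn fun u hu => hpiece u (hQ.subset hu)
  exact ⟨T, hTverts ▸ hnodup, hTverts ▸ hverts, hTsep⟩

lemma exists_bagCarving_confined (hvert : ∀ v : V, ∃ k, v ∈ β k)
    (hconn : ∀ v : V, (G.induce {j | v ∈ β j}).Connected) (i : ι)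
    (hne : (hG.confined r β i).Nonempty) : ∃ T, IsBagCarving β (hG.confined r β i) T := by
  induction hn : {k | hG.IsAncestor r i k}.ncard using Nat.strong_induction_on generalizing i with
  | _ n ih =>
    have : Nonempty (CTree V) := ⟨.leaf hne.some⟩
    choose! tree htree using fun c (hc : hG.IsChild r i c) hc' =>
      ih _ (hn ▸ hc.ncard_descendants_lt) c hc' rfl
    exact exists_bagCarving_of_children hvert hconn hne tree htree

end Carving

end SimpleGraph.IsTree

lemma card_crossing_le {V E : Type*} [DecidableEq V] [Fintype E] {ε : E → V × V} {Δ : ℕ}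
    (hdeg : ∀ v : V, (Finset.univ.filter (fun e : E => (ε e).1 = v ∨ (ε e).2 = v)).card ≤ Δ)
    (b : Finset V) {S : List V}
    (hS : ∀ e : E, (((ε e).1 ∈ S ∧ (ε e).2 ∉ S) ∨ ((ε e).2 ∈ S ∧ (ε e).1 ∉ S)) →
      (ε e).1 ∈ b ∨ (ε e).2 ∈ b) :
    (Finset.univ.filter (fun e : E =>
      ((ε e).1 ∈ S ∧ (ε e).2 ∉ S) ∨ ((ε e).2 ∈ S ∧ (ε e).1 ∉ S))).card ≤ b.card * Δ := by
  classical
  calc _ ≤ (b.biUnion fun v =>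
        Finset.univ.filter fun e : E => (ε e).1 = v ∨ (ε e).2 = v).card := by
        refine Finset.card_le_card fun e he => Finset.mem_biUnion.2 ?_
        rcases hS e (Finset.mem_filter.1 he).2 with h | h
        · exact ⟨_, h, by simp⟩
        · exact ⟨_, h, by simp⟩
    _ ≤ ∑ v ∈ b, (Finset.univ.filter fun e : E => (ε e).1 = v ∨ (ε e).2 = v).card :=
        Finset.card_biUnion_le
    _ ≤ b.card * Δ := Finset.sum_le_card_nsmul _ _ _ fun v _ => hdeg v

/-- There is an absolute constant `C` such that every finite loopless multigraph `G`
of maximum degree at most `Δ` admitting a tree decomposition of width at most `t`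
admits a rooted carving decomposition of width at most `C·Δ·(t+1)`; that is,
`carw(G) ≤ C·Δ·(tw(G)+1)`. -/
theorem carvingWidth_le_of_treewidth :
    ∃ C : ℕ, ∀ (V E ι : Type) [Fintype V] [DecidableEq V] [Fintype E] [Fintype ι],
    ∀ (ε : E → V × V), (∀ e, (ε e).1 ≠ (ε e).2) →
    ∀ (Δ t : ℕ),
    -- maximum degree at most Δ
    (∀ v : V, (Finset.univ.filter (fun e : E => (ε e).1 = v ∨ (ε e).2 = v)).card ≤ Δ) →
    -- a tree decomposition (Tg, β) of width at most t
    ∀ (Tg : SimpleGraph ι) (β : ι → Finset V), Tg.IsTree →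
    (∀ v : V, ∃ i, v ∈ β i) →
    (∀ e : E, ∃ i, (ε e).1 ∈ β i ∧ (ε e).2 ∈ β i) →
    (∀ v : V, (Tg.induce {i : ι | v ∈ β i}).Connected) →
    (∀ i, (β i).card ≤ t + 1) →
    Nonempty V →
    -- then there is a rooted carving decomposition of width at most C·Δ·(t+1)
    ∃ T : CTree V, T.verts.Nodup ∧ (∀ v : V, v ∈ T.verts) ∧
      ∀ p s, T.subtreeAt p = some s →
        (Finset.univ.filter (fun e : E =>
          ((ε e).1 ∈ s.verts ∧ (ε e).2 ∉ s.verts) ∨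
          ((ε e).2 ∈ s.verts ∧ (ε e).1 ∉ s.verts))).card ≤ C * Δ * (t + 1) := by
  refine ⟨1, fun V E ι _ _ _ _ ε _ Δ t hdeg Tg β hT hvert hcov hconn hsize ⟨v₀⟩ => ?_⟩
  obtain ⟨r⟩ := hT.connected.nonempty
  have hroot : ∀ v, v ∈ hT.confined r β r := fun _ k _ => hT.isAncestor_root k
  obtain ⟨T, hnodup, hverts, hsep⟩ :=
    SimpleGraph.IsTree.exists_bagCarving_confined hvert hconn r ⟨v₀, hroot v₀⟩
  refine ⟨T, hnodup, fun v => (hverts v).2 (hroot v), fun p s hs => ?_⟩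
  obtain ⟨k, hk⟩ := hsep p s hs
  have hcut : ∀ e : E, (((ε e).1 ∈ s.verts ∧ (ε e).2 ∉ s.verts) ∨
      ((ε e).2 ∈ s.verts ∧ (ε e).1 ∉ s.verts)) → (ε e).1 ∈ β k ∨ (ε e).2 ∈ β k := by
    intro e he
    obtain ⟨j, hj₁, hj₂⟩ := hcov e
    rcases he with ⟨h₁, h₂⟩ | ⟨h₂, h₁⟩
    · exact hk _ h₁ _ h₂ ⟨j, hj₁, hj₂⟩
    · exact (hk _ h₂ _ h₁ ⟨j, hj₂, hj₁⟩).symm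
  calc _ ≤ (β k).card * Δ := card_crossing_le hdeg (β k) hcut
    _ ≤ 1 * Δ * (t + 1) := by rw [one_mul, mul_comm]; exact Nat.mul_le_mul_left Δ (hsize k)
end

section
/- Let k ≥ 2, let Y₁,...,Y_k be disjoint blocks of variables each of size 2·⌈log₂ k⌉, let X be their union (so |X| = n = 2k⌈log₂ k⌉), and let δ_n : {0,1}^X → {0,1} be the element distinctness function, which outputs 1 on an assignment iff the k binary strings s₁,...,s_k read off from the blocks are pairwise distinct. Then for each i, the number of distinct functions {0,1}^{Y_i} → {0,1} obtained from δ_n by fixing all variables outside Y_i to Boolean constants is at least 2^{c·n} for some absolute constant c > 0 (for all sufficiently large k). -/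
/-- The element distinctness function on `k` blocks of `L` Boolean variables: it outputs
`true` iff the `k` binary strings read off from the blocks are pairwise distinct. -/
def elemDist (k L : ℕ) (α : Fin k × Fin L → Bool) : Bool :=
  decide (∀ i j : Fin k, i ≠ j → ∃ m : Fin L, α (i, m) ≠ α (j, m))

/-- For the element distinctness function `δ_n` on `n = 2k⌈log₂ k⌉` variables split into
`k` blocks `Y_1, ..., Y_k` of size `2⌈log₂ k⌉` each, there is an absolute constant
`c > 0` such that, for all sufficiently large `k` and each block `Y_i`, the number of
distinct subfunctions of `δ_n` on `Y_i` (obtained by fixing all variables outside `Y_i`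
to Boolean constants) is at least `2^(c·n)`. -/
theorem elemDist_many_subfunctions :
    ∃ c : ℝ, 0 < c ∧ ∃ k₀ : ℕ, ∀ k : ℕ, k₀ ≤ k → ∀ i : Fin k,
      (2 : ℝ) ^ (c * ((k : ℝ) * (2 * (Nat.clog 2 k : ℝ)))) ≤
        (Set.ncard {g : (Fin (2 * Nat.clog 2 k) → Bool) → Bool |
          ∃ β : Fin k × Fin (2 * Nat.clog 2 k) → Bool,
            g = fun γ => elemDist k (2 * Nat.clog 2 k)
              (fun x => if x.1 = i then γ x.2 else β x)} : ℝ) := by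
  refine ⟨1/8, by norm_num, 2, fun k hk i => ?_⟩
  set t := Nat.clog 2 k with ht
  -- an injective binary encoding of block indices into strings of length t
  obtain ⟨enc⟩ : Nonempty (Fin k ↪ (Fin t → Bool)) := by
    apply Function.Embedding.nonempty_of_card_le
    simpa using Nat.le_pow_clog (by norm_num) k
  -- the assignment built from a choice of second halves
  set D := ({j : Fin k // j ≠ i} → Fin t → Bool) with hD
  set B : D → Fin k × Fin (2*t) → Bool :=
    fun h x => if hx : (x.2 : ℕ) < t then enc x.1 ⟨x.2, hx⟩
      else if hj : x.1 = i then false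
        else h ⟨x.1, hj⟩ ⟨(x.2 : ℕ) - t, by have := x.2.isLt; omega⟩ with hB
  set Φ : D → ((Fin (2*t) → Bool) → Bool) :=
    fun h γ => elemDist k (2*t) (fun x => if x.1 = i then γ x.2 else B h x) with hΦdef
  -- first halves distinguish distinct blocks
  have first : ∀ (h h' : D) (a b : Fin k), a ≠ b →
      ∃ m : Fin (2*t), B h (a, m) ≠ B h' (b, m) := by
    intro h h' a b hab
    have hne : enc a ≠ enc b := fun e => hab (enc.injective e)
    obtain ⟨m', hm'⟩ := Function.ne_iff.mp hne
    have hlt : (m' : ℕ) < 2*t := by have := m'.isLt; omega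
    refine ⟨⟨m', hlt⟩, ?_⟩
    simp only [hB]
    rw [dif_pos m'.isLt, dif_pos m'.isLt]
    simpa using hm'
  -- second halves are read off from the assignment
  have second : ∀ (h : D) (j : {j : Fin k // j ≠ i}) (m₀ : Fin t),
      B h (j.1, ⟨t + m₀, by have := m₀.isLt; omega⟩) = h j m₀ := by
    intro h j m₀
    simp only [hB]
    rw [dif_neg (by simp), dif_neg j.2]
    congr 1
    exact Fin.ext (by simp)
  have hΦ : Function.Injective Φ := by
    intro h₁ h₂ hgg
    by_contra hne
    obtain ⟨j, hj⟩ := Function.ne_iff.mp hne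
    obtain ⟨m₀, hm₀⟩ := Function.ne_iff.mp hj
    set γ : Fin (2*t) → Bool := fun p => B h₁ (j.1, p) with hγ
    have h1 : Φ h₁ γ = false := by
      simp only [hΦdef, elemDist, decide_eq_false_iff_not]
      intro hall
      obtain ⟨m, hm⟩ := hall i j.1 (Ne.symm j.2)
      apply hm
      simp [hγ, if_neg j.2]
    have h2 : Φ h₂ γ = true := by
      simp only [hΦdef, elemDist, decide_eq_true_eq]
      intro a b hab
      -- a helper for mixed pairs (block i versus block b ≠ i)
      have mixed : ∀ b : Fin k, b ≠ i →
          ∃ m : Fin (2*t), γ m ≠ B h₂ (b, m) := by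
        intro b hbi
        by_cases hbj : b = j.1
        · subst hbj
          refine ⟨⟨t + m₀, by have := m₀.isLt; omega⟩, ?_⟩
          show B h₁ (j.1, ⟨t + ↑m₀, by have := m₀.isLt; omega⟩) ≠
            B h₂ (j.1, ⟨t + ↑m₀, by have := m₀.isLt; omega⟩)
          rw [second h₁ j m₀, second h₂ j m₀]
          exact hm₀
        · exact first h₁ h₂ j.1 b (fun e => hbj e.symm)
      by_cases hai : a = i
      · have hbi : b ≠ i := fun e => hab (hai.trans e.symm)
        obtain ⟨m, hm⟩ := mixed b hbi
        refine ⟨m, ?_⟩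
        show (if a = i then γ m else B h₂ (a, m)) ≠
          (if b = i then γ m else B h₂ (b, m))
        rw [if_pos hai, if_neg hbi]
        exact hm
      · by_cases hbi : b = i
        · obtain ⟨m, hm⟩ := mixed a hai
          refine ⟨m, ?_⟩
          show (if a = i then γ m else B h₂ (a, m)) ≠
            (if b = i then γ m else B h₂ (b, m))
          rw [if_neg hai, if_pos hbi]
          exact fun e => hm e.symm
        · obtain ⟨m, hm⟩ := first h₂ h₂ a b hab
          refine ⟨m, ?_⟩
          show (if a = i then γ m else B h₂ (a, m)) ≠
            (if b = i then γ m else B h₂ (b, m))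
          rw [if_neg hai, if_neg hbi]
          exact hm
    rw [hgg] at h1
    rw [h1] at h2
    exact Bool.false_ne_true h2
  -- counting
  have hcardD : Nat.card D = 2 ^ (t * (k-1)) := by
    rw [Nat.card_eq_fintype_card]
    rw [Fintype.card_fun]
    have h1 : Fintype.card ({j : Fin k // j ≠ i}) = k - 1 := by
      simpa using Fintype.card_subtype_compl (· = i)
    have h2 : Fintype.card (Fin t → Bool) = 2 ^ t := by simp
    rw [h1, h2, ← pow_mul]
  have hsub : Set.range Φ ⊆ {g : (Fin (2*t) → Bool) → Bool |
      ∃ β : Fin k × Fin (2*t) → Bool,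
        g = fun γ => elemDist k (2*t) (fun x => if x.1 = i then γ x.2 else β x)} := by
    rintro g ⟨h, rfl⟩
    exact ⟨B h, rfl⟩
  have hcard : 2 ^ (t*(k-1)) ≤ Set.ncard {g : (Fin (2*t) → Bool) → Bool |
      ∃ β : Fin k × Fin (2*t) → Bool,
        g = fun γ => elemDist k (2*t) (fun x => if x.1 = i then γ x.2 else β x)} := by
    calc 2^(t*(k-1)) = Nat.card D := hcardD.symm
      _ = (Set.range Φ).ncard := by
          rw [← Nat.card_range_of_injective hΦ, Nat.card_coe_set_eq]
      _ ≤ _ := Set.ncard_le_ncard hsub (Set.toFinite _)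
  have hk2 : (2:ℝ) ≤ (k:ℝ) := by exact_mod_cast hk
  have ht0 : (0:ℝ) ≤ (t:ℝ) := Nat.cast_nonneg t
  calc (2:ℝ) ^ ((1/8 : ℝ) * ((k : ℝ) * (2 * (t : ℝ))))
      ≤ (2:ℝ) ^ (((t*(k-1) : ℕ)) : ℝ) := by
        apply Real.rpow_le_rpow_of_exponent_le one_le_two
        rw [Nat.cast_mul, Nat.cast_sub (le_trans one_le_two hk)]
        push_cast
        nlinarith
    _ = ((2^(t*(k-1)) : ℕ) : ℝ) := by
        rw [Real.rpow_natCast]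
        push_cast
        ring
    _ ≤ _ := Nat.cast_le.mpr hcard
end
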